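/- Let n ≥ 0. Assume every boldface Σ¹_{n+2} subset of Cantor space 2^ω has the perfect set property, let R ⊆ 2^ω × 2^ω be a boldface Σ¹_{n+2} set which is the graph of a well-ordering ≤* of its field X ⊆ 2^ω, and let P ⊆ X be a perfect set. Then for every perfect set P₀ ⊆ 2^ω and every continuous injection f₀ : P₀ → P there exist a perfect set P₁ ⊆ P₀ and a continuous injection f₁ : P₁ → P such that f₁(x) <* f₀(x) for all x ∈ P₁. -/

import Mathlib

namespace GaleStewart

/-- Baire space `ℕ^ω`. -/
abbrev Baire : Type := ℕ → ℕ

/-- Cantor space `2^ω`. -/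
abbrev Cantor : Type := ℕ → Bool

/-- A strategy: given the finite sequence of moves made so far, produce the next move. -/
abbrev Strategy : Type := List ℕ → ℕ

/-- The infinite play `x` is consistent with `σ` viewed as a strategy for player I,
who plays the moves `x (2*k)` on the basis of the position of length `2*k`. -/
def PlayIsI (σ : Strategy) (x : Baire) : Prop :=
  ∀ k : ℕ, x (2 * k) = σ (List.ofFn fun i : Fin (2 * k) => x i.val)

/-- The infinite play `x` is consistent with `τ` viewed as a strategy for player II,
who plays the moves `x (2*k+1)` on the basis of the position of length `2*k+1`. -/
def PlayIsII (τ : Strategy) (x : Baire) : Prop :=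
  ∀ k : ℕ, x (2 * k + 1) = τ (List.ofFn fun i : Fin (2 * k + 1) => x i.val)

/-- The Gale–Stewart game with payoff set `A ⊆ ℕ^ω` is determined: player I has a
winning strategy (every play following it lies in `A`), or player II has a winning
strategy (every play following it lies outside `A`). -/
def Determined (A : Set Baire) : Prop :=
  (∃ σ : Strategy, ∀ x : Baire, PlayIsI σ x → x ∈ A) ∨
    (∃ τ : Strategy, ∀ x : Baire, PlayIsII τ x → x ∉ A)

/-- Boldface `Π¹ₙ` subsets of a topological space, where `Π¹₀` means closed, and a set
is `Π¹ₙ₊₁` iff its complement is the projection along a Baire-space coordinate of a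
`Π¹ₙ` set.  (So `Σ¹₁` = projections of closed sets, `Π¹ₙ` = complements of `Σ¹ₙ`,
`Σ¹ₙ₊₁` = projections of `Π¹ₙ` sets.) -/
def boldfacePiAux : ℕ → (X : Type) → TopologicalSpace X → Set X → Prop
  | 0, _X, tX, A => letI := tX; IsClosed A
  | n + 1, X, tX, A =>
      letI := tX
      ∃ B : Set (X × Baire),
        boldfacePiAux n (X × Baire) inferInstance B ∧
          Aᶜ = {x | ∃ y : Baire, (x, y) ∈ B}

/-- The boldface pointclass `Π¹ₙ`. -/
def BoldfacePi (n : ℕ) (X : Type) [tX : TopologicalSpace X] (A : Set X) : Prop :=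
  boldfacePiAux n X tX A

/-- The boldface pointclass `Σ¹ₙ` (meaningful for `n ≥ 1`): projections along a
Baire-space coordinate of `Π¹ₙ₋₁` sets. -/
def BoldfaceSigma (n : ℕ) (X : Type) [tX : TopologicalSpace X] (A : Set X) : Prop :=
  ∃ B : Set (X × Baire),
    boldfacePiAux (n - 1) (X × Baire) inferInstance B ∧
      A = {x | ∃ y : Baire, (x, y) ∈ B}

/-- The field of a relation `R ⊆ 2^ω × 2^ω`. -/
def fieldOf (R : Set (Cantor × Cantor)) : Set Cantor :=
  {y | ∃ x, (x, y) ∈ R ∨ (y, x) ∈ R}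

/-- `R ⊆ 2^ω × 2^ω` is the graph of a well-ordering of its field: on the field,
`R` is reflexive, antisymmetric, transitive, total, and every nonempty subset of
the field has an `R`-least element. -/
def IsWellOrderingGraph (R : Set (Cantor × Cantor)) : Prop :=
  (∀ x ∈ fieldOf R, (x, x) ∈ R) ∧
  (∀ x y, (x, y) ∈ R → (y, x) ∈ R → x = y) ∧
  (∀ x y z, (x, y) ∈ R → (y, z) ∈ R → (x, z) ∈ R) ∧
  (∀ x ∈ fieldOf R, ∀ y ∈ fieldOf R, (x, y) ∈ R ∨ (y, x) ∈ R) ∧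
  (∀ S : Set Cantor, S ⊆ fieldOf R → S.Nonempty → ∃ m ∈ S, ∀ y ∈ S, (m, y) ∈ R)

/-- A perfect subset of Cantor space: nonempty, closed, and without isolated points. -/
def IsPerfectSet (P : Set Cantor) : Prop :=
  P.Nonempty ∧ Perfect P

/-- The perfect set property for `A ⊆ 2^ω`: `A` is countable or has a perfect subset. -/
def PerfectSetProperty (A : Set Cantor) : Prop :=
  A.Countable ∨ ∃ P : Set Cantor, P ⊆ A ∧ IsPerfectSet P


open Function Set

private lemma cantor_uncountable : Uncountable Cantor := by
  rw [← not_countable_iff]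
  intro h
  obtain ⟨f, hf⟩ := exists_surjective_nat Cantor
  obtain ⟨n, hn⟩ := hf (fun k => !(f k k))
  have := congrFun hn n
  simp at this

/-- `Π¹ₘ` pointclasses are closed under continuous preimages. -/
private lemma piAux_preimage :
    ∀ (m : ℕ) (X Y : Type) (tX : TopologicalSpace X) (tY : TopologicalSpace Y)
      (c : X → Y), @Continuous X Y tX tY c → ∀ B : Set Y,
      boldfacePiAux m Y tY B → boldfacePiAux m X tX (c ⁻¹' B) := by
  intro m
  induction m with
  | zero =>
    intro X Y tX tY c hc B hB
    exact @IsClosed.preimage X Y tX tY c hc B hB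
  | succ m ih =>
    intro X Y tX tY c hc B hB
    obtain ⟨C, hC, hCeq⟩ := hB
    letI := tX
    letI := tY
    refine ⟨(fun p : X × Baire => (c p.1, p.2)) ⁻¹' C,
      ih (X × Baire) (Y × Baire) _ _ _ ((hc.comp continuous_fst).prodMk continuous_snd) C hC, ?_⟩
    ext x
    have := Set.ext_iff.mp hCeq (c x)
    simpa using this

/-- `Σ¹ₘ` pointclasses are closed under continuous preimages. -/
private lemma sigma_preimage (m : ℕ) {X Y : Type} [tX : TopologicalSpace X]
    [tY : TopologicalSpace Y] (c : X → Y) (hc : Continuous c) (A : Set Y)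
    (hA : BoldfaceSigma m Y A) : BoldfaceSigma m X (c ⁻¹' A) := by
  obtain ⟨B, hB, hEq⟩ := hA
  refine ⟨(fun p : X × Baire => (c p.1, p.2)) ⁻¹' B,
    piAux_preimage _ _ _ _ _ _ ((hc.comp continuous_fst).prodMk continuous_snd) B hB, ?_⟩
  ext x
  have := Set.ext_iff.mp hEq (c x)
  simpa using this

/-- The continuous injective image of a perfect subset of Cantor space is perfect. -/
private lemma isPerfectSet_image {a : Cantor → Cantor} (ha : Continuous a)
    (hinj : Function.Injective a) {Q : Set Cantor} (hQ : IsPerfectSet Q) :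
    IsPerfectSet (a '' Q) := by
  refine ⟨hQ.1.image a, ⟨(hQ.2.closed.isCompact.image ha).isClosed, ?_⟩⟩
  rintro x ⟨z, hz, rfl⟩
  rw [accPt_iff_nhds]
  intro U hU
  have hU' : a ⁻¹' U ∈ nhds z := ha.continuousAt.preimage_mem_nhds hU
  obtain ⟨y, ⟨hyU, hyQ⟩, hyne⟩ := accPt_iff_nhds.mp (hQ.2.acc z hz) _ hU'
  exact ⟨a y, ⟨hyU, Set.mem_image_of_mem a hyQ⟩, fun h => hyne (hinj h)⟩

/-- The inverse of a continuous injection of Cantor space into itself is continuous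
on the range. -/
private lemma invFun_continuousOn {a : Cantor → Cantor} (ha : Continuous a)
    (hinj : Function.Injective a) :
    ContinuousOn (Function.invFun a) (Set.range a) := by
  have hemb : Topology.IsClosedEmbedding a := ha.isClosedEmbedding hinj
  rw [continuousOn_iff_continuous_restrict]
  have : (Set.range a).domRestrict (Function.invFun a)
      = (hemb.toIsEmbedding.toHomeomorph).symm := by
    funext x
    obtain ⟨z, hz⟩ := x.2
    have h2 : (hemb.toIsEmbedding.toHomeomorph) z = x := Subtype.ext hz
    have h3 : (hemb.toIsEmbedding.toHomeomorph).symm x = z := by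
      rw [← h2, Homeomorph.symm_apply_apply]
    rw [h3]
    show Function.invFun a ↑x = z
    rw [← hz, Function.leftInverse_invFun hinj z]
  rw [this]
  exact (hemb.toIsEmbedding.toHomeomorph).symm.continuous

/-- Any perfect subset of Cantor space admits a continuous injection from Cantor space. -/
private lemma exists_embedding_into {P₀ : Set Cantor} (hP₀ : IsPerfectSet P₀) :
    ∃ h : Cantor → Cantor, Set.range h ⊆ P₀ ∧ Continuous h ∧ Function.Injective h := by
  letI := TopologicalSpace.upgradeIsCompletelyMetrizable Cantor
  exact hP₀.2.exists_nat_bool_injection hP₀.1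

/-- Prepending a bit to an element of Cantor space. -/
private def consB (c : Bool) (z : Cantor) : Cantor := fun k =>
  match k with
  | 0 => c
  | k + 1 => z k

private lemma consB_continuous (c : Bool) : Continuous (consB c) := by
  apply continuous_pi
  intro k
  match k with
  | 0 => exact continuous_const
  | k + 1 => exact continuous_apply k

private lemma consB_injective (c : Bool) : Function.Injective (consB c) := by
  intro z w h
  funext k
  exact congrFun h (k + 1)

private lemma consB_ne (z w : Cantor) : consB false z ≠ consB true w := by
  intro h
  have := congrFun h 0
  simp [consB] at this

/-- The common case of the main theorem: given two continuous injections `a b` into `P₀`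
with pointwise distinct values, and a perfect set `Q` on which `f₀ ∘ b` is `R`-below
`f₀ ∘ a`, the image `a '' Q` together with `f₀ ∘ b ∘ a⁻¹` witnesses the conclusion. -/
private lemma main_case (R : Set (Cantor × Cantor)) (P P₀ : Set Cantor)
    (f₀ : Cantor → Cantor) (hf₀cont : ContinuousOn f₀ P₀) (hf₀inj : Set.InjOn f₀ P₀)
    (hf₀maps : Set.MapsTo f₀ P₀ P)
    (a b : Cantor → Cantor) (ha : Continuous a) (hainj : Function.Injective a)
    (hb : Continuous b) (hbinj : Function.Injective b)
    (hra : Set.range a ⊆ P₀) (hrb : Set.range b ⊆ P₀) (hab : ∀ z, a z ≠ b z)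
    (Q : Set Cantor) (hQ : IsPerfectSet Q)
    (hQA : ∀ z ∈ Q, (f₀ (b z), f₀ (a z)) ∈ R) :
    ∃ (P₁ : Set Cantor) (f₁ : Cantor → Cantor),
      P₁ ⊆ P₀ ∧ IsPerfectSet P₁ ∧
      ContinuousOn f₁ P₁ ∧ Set.InjOn f₁ P₁ ∧ Set.MapsTo f₁ P₁ P ∧
      ∀ x ∈ P₁, (f₁ x, f₀ x) ∈ R ∧ f₁ x ≠ f₀ x := by
  have hinv : ∀ z, Function.invFun a (a z) = z := fun z => Function.leftInverse_invFun hainj z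
  refine ⟨a '' Q, fun x => f₀ (b (Function.invFun a x)), ?_, isPerfectSet_image ha hainj hQ,
    ?_, ?_, ?_, ?_⟩
  · exact (Set.image_subset_range a Q).trans hra
  · have h1 : Continuous (fun z => f₀ (b z)) :=
      hf₀cont.comp_continuous hb (fun z => hrb ⟨z, rfl⟩)
    have h2 : ContinuousOn (Function.invFun a) (a '' Q) :=
      (invFun_continuousOn ha hainj).mono (Set.image_subset_range a Q)
    exact h1.comp_continuousOn h2
  · rintro x ⟨z, hz, rfl⟩ y ⟨w, hw, rfl⟩ hxy
    simp only [hinv] at hxy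
    have : b z = b w := hf₀inj (hrb ⟨z, rfl⟩) (hrb ⟨w, rfl⟩) hxy
    exact congrArg a (hbinj this)
  · rintro x ⟨z, hz, rfl⟩
    simp only [hinv]
    exact hf₀maps (hrb ⟨z, rfl⟩)
  · rintro x ⟨z, hz, rfl⟩
    simp only [hinv]
    refine ⟨hQA z hz, fun h => hab z (hf₀inj (hrb ⟨z, rfl⟩) (hra ⟨z, rfl⟩) h).symm⟩

/-- Under the perfect set property for boldface `Σ¹ₙ₊₂` subsets of
Cantor space, if `R` is a boldface `Σ¹ₙ₊₂` graph of a well-ordering of its field `X`,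
`P ⊆ X` is perfect, `P₀` is perfect and `f₀ : P₀ → P` is a continuous injection, then
there are a perfect `P₁ ⊆ P₀` and a continuous injection `f₁ : P₁ → P` with
`f₁(x) <* f₀(x)` for all `x ∈ P₁`. -/
theorem exists_perfect_and_smaller_continuous_injection (n : ℕ)
    (hpsp : ∀ A : Set Cantor, BoldfaceSigma (n + 2) Cantor A → PerfectSetProperty A)
    (R : Set (Cantor × Cantor))
    (hR : BoldfaceSigma (n + 2) (Cantor × Cantor) R)
    (hwo : IsWellOrderingGraph R)
    (P : Set Cantor) (hPsub : P ⊆ fieldOf R) (hP : IsPerfectSet P)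
    (P₀ : Set Cantor) (hP₀ : IsPerfectSet P₀)
    (f₀ : Cantor → Cantor) (hf₀cont : ContinuousOn f₀ P₀)
    (hf₀inj : Set.InjOn f₀ P₀) (hf₀maps : Set.MapsTo f₀ P₀ P) :
    ∃ (P₁ : Set Cantor) (f₁ : Cantor → Cantor),
      P₁ ⊆ P₀ ∧ IsPerfectSet P₁ ∧
      ContinuousOn f₁ P₁ ∧ Set.InjOn f₁ P₁ ∧ Set.MapsTo f₁ P₁ P ∧
      ∀ x ∈ P₁, (f₁ x, f₀ x) ∈ R ∧ f₁ x ≠ f₀ x := by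
  classical
  -- an embedding of Cantor space into `P₀`
  obtain ⟨h, hrange, hcont, hinj⟩ := exists_embedding_into hP₀
  -- two continuous injections into `P₀` with pointwise distinct values
  set a : Cantor → Cantor := fun z => h (consB false z) with ha_def
  set b : Cantor → Cantor := fun z => h (consB true z) with hb_def
  have ha : Continuous a := hcont.comp (consB_continuous false)
  have hb : Continuous b := hcont.comp (consB_continuous true)
  have hainj : Function.Injective a := fun z w hzw =>
    consB_injective false (hinj hzw)
  have hbinj : Function.Injective b := fun z w hzw =>
    consB_injective true (hinj hzw)
  have hra : Set.range a ⊆ P₀ := by rintro x ⟨z, rfl⟩; exact hrange ⟨_, rfl⟩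
  have hrb : Set.range b ⊆ P₀ := by rintro x ⟨z, rfl⟩; exact hrange ⟨_, rfl⟩
  have hab : ∀ z, a z ≠ b z := fun z hzz => consB_ne z z (hinj hzz)
  -- the two comparison sets
  have hfa : Continuous (fun z => f₀ (a z)) :=
    hf₀cont.comp_continuous ha (fun z => hra ⟨z, rfl⟩)
  have hfb : Continuous (fun z => f₀ (b z)) :=
    hf₀cont.comp_continuous hb (fun z => hrb ⟨z, rfl⟩)
  set A : Set Cantor := (fun z => ((f₀ (b z), f₀ (a z)) : Cantor × Cantor)) ⁻¹' R with hA_def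
  set A' : Set Cantor := (fun z => ((f₀ (a z), f₀ (b z)) : Cantor × Cantor)) ⁻¹' R with hA'_def
  have hAsigma : BoldfaceSigma (n + 2) Cantor A :=
    sigma_preimage (n + 2) _ (hfb.prodMk hfa) R hR
  have hA'sigma : BoldfaceSigma (n + 2) Cantor A' :=
    sigma_preimage (n + 2) _ (hfa.prodMk hfb) R hR
  -- the two sets cover Cantor space
  have hcover : A ∪ A' = Set.univ := by
    ext z
    simp only [Set.mem_union, Set.mem_univ, iff_true, hA_def, hA'_def, Set.mem_preimage]
    have h1 : f₀ (a z) ∈ fieldOf R := hPsub (hf₀maps (hra ⟨z, rfl⟩))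
    have h2 : f₀ (b z) ∈ fieldOf R := hPsub (hf₀maps (hrb ⟨z, rfl⟩))
    rcases hwo.2.2.2.1 _ h2 _ h1 with hc | hc
    · exact Or.inl hc
    · exact Or.inr hc
  -- not both can be countable
  have hnotboth : ¬(A.Countable ∧ A'.Countable) := by
    rintro ⟨h1, h2⟩
    have : (Set.univ : Set Cantor).Countable := hcover ▸ h1.union h2
    have : Countable Cantor := Set.countable_univ_iff.mp this
    exact absurd this (by have := cantor_uncountable; exact not_countable)
  -- obtain a perfect subset of one of them and conclude
  rcases hpsp A hAsigma with hAc | ⟨Q, hQA, hQperf⟩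
  · rcases hpsp A' hA'sigma with hA'c | ⟨Q, hQA', hQperf⟩
    · exact absurd ⟨hAc, hA'c⟩ hnotboth
    · exact main_case R P P₀ f₀ hf₀cont hf₀inj hf₀maps b a hb hbinj ha hainj hrb hra
        (fun z hz => (hab z hz.symm)) Q hQperf (fun z hz => hQA' hz)
  · exact main_case R P P₀ f₀ hf₀cont hf₀inj hf₀maps a b ha hainj hb hbinj hra hrb
      hab Q hQperf (fun z hz => hQA hz)


end GaleStewart
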